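/- For every n ≥ 1 and every partition λ of n, the conjugate partition has the same local simplex dimension: dim_loc(λ') = dim_loc(λ). -/

import Mathlib

namespace PartitionLayers

open Nat Multiset

/-! ## The partition graph and local simplex dimension -/

/-- `q` is obtained from `p` by an elementary transfer: decrease one part by 1
(possibly deleting it if it reaches 0) and increase another part by 1
(where `b = 0` encodes the creation of a new part of size 1). -/
def IsTransfer {n : ℕ} (p q : Nat.Partition n) : Prop :=
  ∃ a ∈ p.parts, ∃ b : ℕ, (b = 0 ∨ b ∈ p.parts.erase a) ∧
    q.parts = (b + 1) ::ₘ
      (if a = 1 then (p.parts.erase a).erase b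
       else (a - 1) ::ₘ (p.parts.erase a).erase b)

/-- The partition graph `G_n` on `Par(n)`. -/
def partitionGraph (n : ℕ) : SimpleGraph (Nat.Partition n) where
  Adj p q := p ≠ q ∧ (IsTransfer p q ∨ IsTransfer q p)
  symm := ⟨fun _ _ h => ⟨h.1.symm, h.2.symm⟩⟩
  loopless := ⟨fun _ h => h.1 rfl⟩

/-- `ω_loc(λ)`: the maximum size of a clique of `G_n` containing `λ`. -/
noncomputable def omegaLoc {n : ℕ} (p : Nat.Partition n) : ℕ :=
  sSup {k | ∃ s : Finset (Nat.Partition n), (partitionGraph n).IsNClique k s ∧ p ∈ s}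

/-- The local simplex dimension `dim_loc(λ) = ω_loc(λ) - 1`. -/
noncomputable def dimLoc {n : ℕ} (p : Nat.Partition n) : ℕ :=
  omegaLoc p - 1

/-- The simplex layer `L_r(n) = {λ ⊢ n : dim_loc(λ) = r}`. -/
noncomputable def layer (n r : ℕ) : Set (Nat.Partition n) :=
  {p | dimLoc p = r}

/-- The realized layer spectrum `Spec_Δ(n)`. -/
noncomputable def Spec (n : ℕ) : Set ℕ :=
  {r | (layer n r).Nonempty}

/-- The top local simplex dimension `Δ_loc(n) = max_{λ ⊢ n} dim_loc(λ)`. -/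
noncomputable def DeltaLoc (n : ℕ) : ℕ :=
  sSup (Set.range (dimLoc (n := n)))

/-- The bottom local simplex dimension `δ_loc(n) = min_{λ ⊢ n} dim_loc(λ)`. -/
noncomputable def deltaLoc (n : ℕ) : ℕ :=
  sInf (Set.range (dimLoc (n := n)))

/-- The first-occurrence index `n_r^first = min {n ≥ 1 : L_r(n) ≠ ∅}`. -/
noncomputable def nFirst (r : ℕ) : ℕ :=
  sInf {n | 1 ≤ n ∧ (layer n r).Nonempty}

/-! ## Conjugation -/

private lemma conj_sum_aux (N : ℕ) (s : Multiset ℕ) (hs : ∀ x ∈ s, x ≤ N) :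
    ((Multiset.range N).map fun j => s.countP (fun p => decide (j < p))).sum = s.sum := by
  induction s using Multiset.induction with
  | empty => simp
  | cons a s ih =>
      have ha : a ≤ N := hs a (mem_cons_self a s)
      have hs' : ∀ x ∈ s, x ≤ N := fun x hx => hs x (mem_cons_of_mem hx)
      have hcnt : ∀ j : ℕ, (a ::ₘ s).countP (fun p => decide (j < p)) =
          s.countP (fun p => decide (j < p)) + if j < a then 1 else 0 := by
        intro j
        rw [countP_cons]
        simp
      have hone : (∑ j ∈ Finset.range N, if j < a then (1 : ℕ) else 0) = a := by
        have hsub : Finset.range a ⊆ Finset.range N := Finset.range_subset_range.mpr ha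
        rw [← Finset.sum_subset hsub (fun j _ hj => if_neg (by simpa using hj))]
        calc (∑ j ∈ Finset.range a, if j < a then (1 : ℕ) else 0)
            = ∑ _j ∈ Finset.range a, (1 : ℕ) :=
              Finset.sum_congr rfl (fun j hj => if_pos (Finset.mem_range.mp hj))
          _ = a := by simp
      calc ((Multiset.range N).map fun j => (a ::ₘ s).countP (fun p => decide (j < p))).sum
          = ((Multiset.range N).map fun j =>
              s.countP (fun p => decide (j < p)) + if j < a then 1 else 0).sum := by
            congr 1
            exact Multiset.map_congr rfl (fun j _ => hcnt j)
        _ = ((Multiset.range N).map fun j => s.countP (fun p => decide (j < p))).sum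
              + ((Multiset.range N).map fun j => if j < a then 1 else 0).sum := by
            rw [← Multiset.sum_map_add]
        _ = s.sum + a := by
            rw [ih hs']
            congr 1
        _ = (a ::ₘ s).sum := by rw [Multiset.sum_cons]; omega

/-- The conjugate (transpose) partition `λ'`: its `j`-th column length is the
number of parts of `λ` exceeding `j`. -/
def conj {n : ℕ} (p : Nat.Partition n) : Nat.Partition n :=
  Nat.Partition.ofSums n
    ((Multiset.range n).map fun j => p.parts.countP (fun q => decide (j < q)))
    (by
      have hle : ∀ x ∈ p.parts, x ≤ n := by
        intro x hx
        have h1 := Multiset.single_le_sum (fun y _ => Nat.zero_le y) x hx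
        rw [p.parts_sum] at h1
        exact h1
      rw [conj_sum_aux n p.parts hle]
      exact p.parts_sum)

/-! ## Corners, admissible transfers, and the star/top capacities -/

/-- The weakly decreasing part function of a partition: `partFun p i` is the
`i`-th part (0-indexed), with value `0` beyond the number of parts.  Its Young
diagram is `{(i, j) : j < partFun p i}`. -/
def partFun {n : ℕ} (p : Nat.Partition n) : ℕ → ℕ :=
  fun i => ((p.parts.sort (· ≤ ·)).reverse).getD i 0

/-- Row `i` contains a removable corner of the diagram with row lengths `f`
(namely the cell `(i, f i - 1)`). -/
def HasRemovableCorner (f : ℕ → ℕ) (i : ℕ) : Prop :=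
  f (i + 1) < f i

/-- Row `j` contains an addable corner of the diagram with row lengths `f`
(namely the position `(j, f j)`). -/
def HasAddableCorner (f : ℕ → ℕ) (j : ℕ) : Prop :=
  j = 0 ∨ f j < f (j - 1)

/-- The row-length function obtained by moving one cell from the end of row `i`
to the end of row `j`. -/
def transferFun (f : ℕ → ℕ) (i j : ℕ) : ℕ → ℕ :=
  Function.update (Function.update f i (f i - 1)) j (f j + 1)

/-- The transfer `λ(c → a)` moving the removable corner in row `i` to the
addable corner in row `j` is admissible: it yields a partition (the resulting
row lengths are weakly decreasing) distinct from the original one. -/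
def AdmissibleTransfer (f : ℕ → ℕ) (i j : ℕ) : Prop :=
  HasRemovableCorner f i ∧ HasAddableCorner f j ∧ i ≠ j ∧
    ∀ k, transferFun f i j (k + 1) ≤ transferFun f i j k

/-- The star-capacity `s(λ)`: the maximum, over removable corners `c` of `λ`,
of the number of addable corners `a` with `λ(c → a)` admissible.  (Rows are
indexed in `range (n+1)`, which contains all corner rows; rows without a
removable corner contribute `0`.) -/
noncomputable def sCap {n : ℕ} (p : Nat.Partition n) : ℕ :=
  (Finset.range (n + 1)).sup fun i =>
    Set.ncard {j | AdmissibleTransfer (partFun p) i j}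

/-- The top-capacity `t(λ)`: the maximum, over addable corners `a` of `λ`,
of the number of removable corners `c` with `λ(c → a)` admissible. -/
noncomputable def tCap {n : ℕ} (p : Nat.Partition n) : ℕ :=
  (Finset.range (n + 1)).sup fun j =>
    Set.ncard {i | AdmissibleTransfer (partFun p) i j}

/-! ## Adjacent-layer phase boundaries -/

/-- The adjacent-layer edge boundary `∂^E_{r,r+1}(n)`: edges of `G_n` joining
`L_r(n)` to `L_{r+1}(n)`. -/
noncomputable def edgeBoundary (n r : ℕ) : Set (Sym2 (Nat.Partition n)) :=
  {e | ∃ p q, (partitionGraph n).Adj p q ∧ p ∈ layer n r ∧ q ∈ layer n (r + 1) ∧ e = s(p, q)}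

/-- The adjacent-layer vertex boundary `∂^V_{r,r+1}(n)`: vertices incident to
an edge of `∂^E_{r,r+1}(n)`. -/
noncomputable def vertexBoundary (n r : ℕ) : Set (Nat.Partition n) :=
  {v | ∃ e ∈ edgeBoundary n r, v ∈ e}

/-- The lower-side boundary `∂^-_{r,r+1}(n) = ∂^V_{r,r+1}(n) ∩ L_r(n)`. -/
noncomputable def lowerBoundary (n r : ℕ) : Set (Nat.Partition n) :=
  vertexBoundary n r ∩ layer n r

/-- The upper-side boundary `∂^+_{r,r+1}(n) = ∂^V_{r,r+1}(n) ∩ L_{r+1}(n)`. -/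
noncomputable def upperBoundary (n r : ℕ) : Set (Nat.Partition n) :=
  vertexBoundary n r ∩ layer n (r + 1)


/-! ## Auxiliary lemmas for conjugation invariance -/

/-- The number of parts of `p` exceeding `j` (the `j`-th column length). -/
def colCount {n : ℕ} (p : Nat.Partition n) (j : ℕ) : ℕ :=
  p.parts.countP (fun q => decide (j < q))

lemma part_le {n : ℕ} (p : Nat.Partition n) {x : ℕ} (hx : x ∈ p.parts) : x ≤ n := by
  have := Multiset.single_le_sum (fun y _ => Nat.zero_le y) x hx
  rwa [p.parts_sum] at this

lemma countP_imp_le {s : Multiset ℕ} {p q : ℕ → Bool} (h : ∀ x ∈ s, p x → q x) :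
    s.countP (p ·) ≤ s.countP (q ·) := by
  induction s using Multiset.induction with
  | empty => simp
  | cons a s ih =>
      rw [Multiset.countP_cons, Multiset.countP_cons]
      have h1 := h a (Multiset.mem_cons_self a s)
      have h2 : s.countP (p ·) ≤ s.countP (q ·) :=
        ih fun x hx => h x (Multiset.mem_cons_of_mem hx)
      split_ifs <;> simp_all <;> omega

lemma card_parts_le {n : ℕ} (p : Nat.Partition n) : Multiset.card p.parts ≤ n := by
  have h : ∀ s : Multiset ℕ, (∀ x ∈ s, 0 < x) → Multiset.card s ≤ s.sum := by
    intro s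
    induction s using Multiset.induction with
    | empty => simp
    | cons a s ih =>
        intro h
        have := ih fun x hx => h x (Multiset.mem_cons_of_mem hx)
        have := h a (Multiset.mem_cons_self a s)
        simp only [Multiset.card_cons, Multiset.sum_cons]
        omega
  have := h p.parts fun x hx => p.parts_pos hx
  rwa [p.parts_sum] at this

lemma colCount_le {n : ℕ} (p : Nat.Partition n) (j : ℕ) : colCount p j ≤ n :=
  (Multiset.countP_le_card _ _).trans (card_parts_le p)

lemma colCount_anti {n : ℕ} (p : Nat.Partition n) {j k : ℕ} (h : j ≤ k) :
    colCount p k ≤ colCount p j := by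
  refine countP_imp_le fun x _ hx => ?_
  simp only [decide_eq_true_eq] at hx ⊢
  omega

lemma colCount_eq_zero {n : ℕ} (p : Nat.Partition n) {j : ℕ} (h : n ≤ j) :
    colCount p j = 0 := by
  rw [colCount, Multiset.countP_eq_zero]
  intro x hx
  have := part_le p hx
  simp only [decide_eq_true_eq]
  omega

lemma countP_lt_succ (s : Multiset ℕ) (m : ℕ) :
    s.countP (fun x => decide (m < x))
      = s.countP (fun x => decide (m + 1 < x)) + s.count (m + 1) := by
  induction s using Multiset.induction with
  | empty => simp
  | cons a s ih =>
      rw [Multiset.countP_cons, Multiset.countP_cons, Multiset.count_cons, ih]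
      split_ifs <;> simp_all <;> omega

lemma colCount_inj {n : ℕ} {p q : Nat.Partition n}
    (h : ∀ j, colCount p j = colCount q j) : p = q := by
  ext1
  ext m
  match m with
  | 0 =>
      rw [Multiset.count_eq_zero_of_notMem, Multiset.count_eq_zero_of_notMem]
      · exact fun hm => absurd (q.parts_pos hm) (lt_irrefl 0)
      · exact fun hm => absurd (p.parts_pos hm) (lt_irrefl 0)
  | (k+1) =>
      have h1 := countP_lt_succ p.parts k
      have h2 := countP_lt_succ q.parts k
      have e1 := h k
      have e2 := h (k+1)
      unfold colCount at e1 e2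
      omega

lemma conj_parts {n : ℕ} (p : Nat.Partition n) :
    (conj p).parts = ((Multiset.range n).map fun j => colCount p j).filter (· ≠ 0) := rfl

lemma colCount_conj_eq {n : ℕ} (p : Nat.Partition n) (j : ℕ) :
    colCount (conj p) j = ((Finset.range n).filter (fun i => j < colCount p i)).card := by
  rw [colCount, conj_parts, Multiset.countP_filter, Multiset.countP_map, Finset.card,
    Finset.filter_val, Finset.range_val]
  refine congrArg _ (Multiset.filter_congr ?_)
  intro x _
  simp only [decide_eq_true_eq, ne_eq]
  constructor
  · exact fun h => h.1
  · intro h; exact ⟨h, by omega⟩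

lemma filter_range_eq_range {n : ℕ} {P : ℕ → Prop} [DecidablePred P]
    (hP : ∀ i k, i ≤ k → P k → P i) :
    (Finset.range n).filter P = Finset.range (((Finset.range n).filter P).card) := by
  set S := (Finset.range n).filter P with hS
  have hmem : ∀ i, i ∈ S ↔ i < n ∧ P i := by
    intro i; rw [hS, Finset.mem_filter, Finset.mem_range]
  ext i
  rw [Finset.mem_range]
  constructor
  · intro hi
    obtain ⟨hin, hPi⟩ := (hmem i).mp hi
    have hsub : Finset.range (i + 1) ⊆ S := by
      intro k hk
      rw [Finset.mem_range] at hk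
      exact (hmem k).mpr ⟨by omega, hP k i (by omega) hPi⟩
    have := Finset.card_le_card hsub
    rw [Finset.card_range] at this
    omega
  · intro hi
    by_contra hnot
    have hsub : S ⊆ Finset.range i := by
      intro k hk
      rw [Finset.mem_range]
      by_contra hk2
      obtain ⟨hkn, hPk⟩ := (hmem k).mp hk
      exact hnot ((hmem i).mpr ⟨by omega, hP i k (by omega) hPk⟩)
    have := Finset.card_le_card hsub
    rw [Finset.card_range] at this
    omega

lemma lt_colCount_conj_iff {n : ℕ} (p : Nat.Partition n) (i j : ℕ) :
    i < colCount (conj p) j ↔ i < n ∧ j < colCount p i := by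
  rw [colCount_conj_eq]
  have hrange := filter_range_eq_range (n := n) (P := fun i => j < colCount p i)
    (fun i k hik hk => lt_of_lt_of_le hk (colCount_anti p hik))
  constructor
  · intro h
    have hmem : i ∈ Finset.range (((Finset.range n).filter (fun i => j < colCount p i)).card) :=
      Finset.mem_range.mpr h
    rw [← hrange, Finset.mem_filter, Finset.mem_range] at hmem
    exact hmem
  · intro h
    have hmem : i ∈ (Finset.range n).filter (fun i => j < colCount p i) :=
      Finset.mem_filter.mpr ⟨Finset.mem_range.mpr h.1, h.2⟩
    rw [hrange, Finset.mem_range] at hmem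
    exact hmem

lemma nat_eq_of_lt_iff {x y : ℕ} (h : ∀ i, i < x ↔ i < y) : x = y := by
  rcases Nat.lt_trichotomy x y with h' | h' | h'
  · exact absurd ((h x).mpr h') (lt_irrefl x)
  · exact h'
  · exact absurd ((h y).mp h') (lt_irrefl y)

lemma colCount_conj_conj {n : ℕ} (p : Nat.Partition n) (j : ℕ) :
    colCount (conj (conj p)) j = colCount p j := by
  refine nat_eq_of_lt_iff fun i => ?_
  constructor
  · intro h
    rw [lt_colCount_conj_iff] at h
    obtain ⟨hin, h2⟩ := h
    rw [lt_colCount_conj_iff] at h2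
    exact h2.2
  · intro h
    rw [lt_colCount_conj_iff]
    refine ⟨lt_of_lt_of_le h (colCount_le p j), ?_⟩
    rw [lt_colCount_conj_iff]
    have h1 : j < n := by
      by_contra hc
      rw [colCount_eq_zero p (by omega)] at h
      omega
    exact ⟨h1, h⟩

lemma conj_conj {n : ℕ} (p : Nat.Partition n) : conj (conj p) = p :=
  colCount_inj fun j => colCount_conj_conj p j

lemma conj_injective {n : ℕ} : Function.Injective (conj (n := n)) := by
  intro p q h
  have := congrArg conj h
  rwa [conj_conj, conj_conj] at this

lemma two_le_card_of_nodup {s : Multiset ℕ} (hs : s.Nodup) {x y : ℕ} (hx : x ∈ s)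
    (hy : y ∈ s) (hxy : x ≠ y) : 2 ≤ Multiset.card s := by
  have hy' : y ∈ s.erase x := (hs.mem_erase_iff).mpr ⟨hxy.symm, hy⟩
  rw [← Multiset.cons_erase hx, ← Multiset.cons_erase hy']
  rw [Multiset.card_cons, Multiset.card_cons]
  omega

lemma isTransfer_conj {n : ℕ} (hn : 1 ≤ n) {p q : Nat.Partition n}
    (h : IsTransfer p q) (hpq : p ≠ q) : IsTransfer (conj p) (conj q) := by
  obtain ⟨a, ha, b, hb, hq⟩ := h
  have ha1 : 0 < a := p.parts_pos ha
  have han : a ≤ n := part_le p ha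
  have hbn : b < n := by
    rcases hb with rfl | hb
    · omega
    · have hsum : a + b ≤ n := by
        have h1 : p.parts = a ::ₘ p.parts.erase a := (Multiset.cons_erase ha).symm
        have h2 := Multiset.single_le_sum (fun y _ => Nat.zero_le y) b hb
        have h3 : p.parts.sum = n := p.parts_sum
        rw [h1, Multiset.sum_cons] at h3
        omega
      omega
  have h0mem : ∀ s : Multiset ℕ, s ≤ p.parts → (0 : ℕ) ∉ s := by
    intro s hs h0
    exact absurd (p.parts_pos (Multiset.mem_of_le hs h0)) (lt_irrefl 0)
  have hab : a - 1 ≠ b := by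
    intro habe
    apply hpq
    ext1
    rw [hq]
    by_cases ha' : a = 1
    · subst ha'
      have hb0 : b = 0 := by omega
      subst hb0
      rw [if_pos rfl,
        Multiset.erase_of_notMem (h0mem _ (Multiset.erase_le _ _)),
        Multiset.cons_erase ha]
    · rw [if_neg ha']
      have hbe : b ∈ p.parts.erase a := by
        rcases hb with rfl | hb
        · omega
        · exact hb
      rw [← habe] at hbe
      rw [← habe, Multiset.cons_erase hbe]
      have : a - 1 + 1 = a := by omega
      rw [this, Multiset.cons_erase ha]
  -- the key column-count identity
  have hcol : ∀ j, colCount q j + (if j = a - 1 then 1 else 0)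
      = colCount p j + (if j = b then 1 else 0) := by
    intro j
    unfold colCount
    rw [hq]
    by_cases hb0 : b = 0
    · subst hb0
      rw [Multiset.erase_of_notMem (h0mem _ (Multiset.erase_le _ _))]
      have hp : p.parts = a ::ₘ p.parts.erase a := (Multiset.cons_erase ha).symm
      conv_rhs => rw [hp]
      by_cases ha' : a = 1
      · omega
      · rw [if_neg ha']
        simp only [Multiset.countP_cons, decide_eq_true_eq]
        split_ifs <;> omega
    · have hbe : b ∈ p.parts.erase a := by
        rcases hb with rfl | hb
        · omega
        · exact hb
      have hp : p.parts = a ::ₘ b ::ₘ (p.parts.erase a).erase b := by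
        rw [Multiset.cons_erase hbe, Multiset.cons_erase ha]
      conv_rhs => rw [hp]
      by_cases ha' : a = 1
      · rw [if_pos ha']
        subst ha'
        simp only [Multiset.countP_cons, decide_eq_true_eq]
        split_ifs <;> omega
      · rw [if_neg ha']
        simp only [Multiset.countP_cons, decide_eq_true_eq]
        split_ifs <;> omega
  obtain ⟨A, hA⟩ : ∃ x, colCount p (a - 1) = x := ⟨_, rfl⟩
  obtain ⟨B, hBd⟩ : ∃ x, colCount p b = x := ⟨_, rfl⟩
  have hqa : colCount q (a - 1) + 1 = A := by
    have h' := hcol (a - 1)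
    rw [if_pos rfl, if_neg hab, hA] at h'
    omega
  have hA1 : 1 ≤ A := by omega
  have hqb : colCount q b = B + 1 := by
    have h' := hcol b
    rw [if_neg (fun hc => hab hc.symm), if_pos rfl, hBd] at h'
    omega
  have hother : ∀ j, j ≠ a - 1 → j ≠ b → colCount q j = colCount p j := by
    intro j h1 h2
    have h' := hcol j
    rw [if_neg h1, if_neg h2] at h'
    omega
  have han' : a - 1 < n := by omega
  have hAmem : A ∈ (conj p).parts := by
    rw [conj_parts]
    exact Multiset.mem_filter.mpr
      ⟨Multiset.mem_map.mpr ⟨a - 1, Multiset.mem_range.mpr han', hA⟩, by omega⟩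
  -- split the range multiset at the two special indices
  have hnodup := Multiset.nodup_range n
  have hmem_a : (a - 1) ∈ Multiset.range n := Multiset.mem_range.mpr han'
  have hmem_b : b ∈ (Multiset.range n).erase (a - 1) :=
    (hnodup.mem_erase_iff).mpr ⟨fun hc => hab hc.symm, Multiset.mem_range.mpr hbn⟩
  obtain ⟨t, ht⟩ : ∃ t, ((Multiset.range n).erase (a - 1)).erase b = t := ⟨_, rfl⟩
  have hrange : Multiset.range n = (a - 1) ::ₘ b ::ₘ t := by
    rw [← ht, Multiset.cons_erase hmem_b, Multiset.cons_erase hmem_a]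
  have htprop : ∀ x ∈ t, x ≠ a - 1 ∧ x ≠ b := by
    intro x hx
    rw [← ht] at hx
    have hnodup2 : ((Multiset.range n).erase (a - 1)).Nodup := hnodup.erase _
    have h1 : x ∈ (Multiset.range n).erase (a - 1) := Multiset.mem_of_mem_erase hx
    exact ⟨((hnodup.mem_erase_iff).mp h1).1, ((hnodup2.mem_erase_iff).mp hx).1⟩
  obtain ⟨M', hM'⟩ : ∃ M, (t.map fun j => colCount p j).filter (· ≠ 0) = M := ⟨_, rfl⟩
  have h0M : (0 : ℕ) ∉ M' := by
    rw [← hM']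
    intro hc
    exact (Multiset.mem_filter.mp hc).2 rfl
  have hmapt : t.map (fun j => colCount q j) = t.map (fun j => colCount p j) :=
    Multiset.map_congr rfl fun x hx => hother x (htprop x hx).1 (htprop x hx).2
  have hconj_p : (conj p).parts = A ::ₘ (if B = 0 then M' else B ::ₘ M') := by
    rw [conj_parts, hrange]
    simp only [Multiset.map_cons]
    rw [hA, hBd]
    by_cases hB0 : B = 0
    · rw [if_pos hB0, hB0, Multiset.filter_cons_of_pos, Multiset.filter_cons_of_neg, hM']
      · simp
      · show A ≠ 0
        omega
    · rw [if_neg hB0, Multiset.filter_cons_of_pos, Multiset.filter_cons_of_pos, hM']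
      · show B ≠ 0
        omega
      · show A ≠ 0
        omega
  have hBmem : B = 0 ∨ B ∈ (conj p).parts.erase A := by
    by_cases hB0 : B = 0
    · exact Or.inl hB0
    · refine Or.inr ?_
      rw [hconj_p, Multiset.erase_cons_head, if_neg hB0]
      exact Multiset.mem_cons_self _ _
  have hE : ((conj p).parts.erase A).erase B = M' := by
    rw [hconj_p, Multiset.erase_cons_head]
    by_cases hB0 : B = 0
    · rw [if_pos hB0, hB0]
      exact Multiset.erase_of_notMem h0M
    · rw [if_neg hB0, Multiset.erase_cons_head]
  refine ⟨A, hAmem, B, hBmem, ?_⟩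
  rw [hE, conj_parts, hrange]
  simp only [Multiset.map_cons]
  rw [hmapt]
  have hqa' : colCount q (a - 1) = A - 1 := by omega
  rw [hqa', hqb]
  by_cases hA1' : A = 1
  · rw [if_pos hA1', hA1', Multiset.filter_cons_of_neg, Multiset.filter_cons_of_pos, hM']
    · show B + 1 ≠ 0
      omega
    · simp
  · rw [if_neg hA1', Multiset.filter_cons_of_pos, Multiset.filter_cons_of_pos, hM',
      Multiset.cons_swap]
    · show B + 1 ≠ 0
      omega
    · show A - 1 ≠ 0
      omega

lemma adj_conj {n : ℕ} (hn : 1 ≤ n) {p q : Nat.Partition n}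
    (h : (partitionGraph n).Adj p q) : (partitionGraph n).Adj (conj p) (conj q) := by
  obtain ⟨hne, h | h⟩ := h
  · exact ⟨fun hc => hne (conj_injective hc), Or.inl (isTransfer_conj hn h hne)⟩
  · exact ⟨fun hc => hne (conj_injective hc), Or.inr (isTransfer_conj hn h (Ne.symm hne))⟩

lemma clique_exists_conj {n : ℕ} (hn : 1 ≤ n) (r : Nat.Partition n) (k : ℕ)
    (h : ∃ s : Finset (Nat.Partition n), (partitionGraph n).IsNClique k s ∧ r ∈ s) :
    ∃ s : Finset (Nat.Partition n), (partitionGraph n).IsNClique k s ∧ conj r ∈ s := by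
  obtain ⟨s, hs, hr⟩ := h
  refine ⟨s.image conj, ⟨?_, ?_⟩, Finset.mem_image_of_mem _ hr⟩
  · intro x hx y hy hxy
    rw [Finset.coe_image] at hx hy
    obtain ⟨u, hu, rfl⟩ := hx
    obtain ⟨v, hv, rfl⟩ := hy
    have huv : u ≠ v := fun hc => hxy (congrArg conj hc)
    exact adj_conj hn (hs.1 hu hv huv)
  · rw [Finset.card_image_of_injective _ conj_injective]
    exact hs.2

lemma omegaLoc_conj {n : ℕ} (hn : 1 ≤ n) (p : Nat.Partition n) :
    omegaLoc (conj p) = omegaLoc p := by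
  unfold omegaLoc
  congr 1
  ext k
  simp only [Set.mem_setOf_eq]
  constructor
  · intro h
    have := clique_exists_conj hn (conj p) k h
    rwa [conj_conj] at this
  · exact clique_exists_conj hn p k

/-- for every `n ≥ 1` and every partition `λ` of `n`, the conjugate
partition has the same local simplex dimension: `dim_loc(λ') = dim_loc(λ)`. -/
theorem dimLoc_conj (n : ℕ) (hn : 1 ≤ n) (p : Nat.Partition n) :
    dimLoc (conj p) = dimLoc p := by
  unfold dimLoc
  rw [omegaLoc_conj hn]

end PartitionLayers
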